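/- Let m ∈ ℕ (m ≥ 1). Then ∫_{−∞}^{∞} Φ(x) dx = 1; that is, Φ is a probability density function on ℝ. -/

import Mathlib

open scoped BigOperators
open Real Filter

/-- The algebraic sigmoid function `φ(x) = x / (1 + x^(2m))^(1/(2m))`. -/
noncomputable def phi (m : ℕ) (x : ℝ) : ℝ :=
  x / (1 + x ^ (2 * m)) ^ ((1 : ℝ) / (2 * m))

/-- The activation function `Φ(x) = (φ(x+1) - φ(x-1))/4`. -/
noncomputable def Phi (m : ℕ) (x : ℝ) : ℝ :=
  (phi m (x + 1) - phi m (x - 1)) / 4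

/-!
Writing `y = x - 1`, `Φ(x) = (φ(y + 2) - φ(y)) / 4`. For a continuous monotone `f` with limits
`a` at `-∞` and `b` at `+∞`, the sliding integral `x ↦ ∫_x^{x+h} f` is a primitive of the nonnegative
function `f(x + h) - f(x)` and is squeezed between `h f(x)` and `h f(x + h)`, so it tends to `h a` and
`h b`; hence `∫ (f(x + h) - f(x)) dx = h (b - a)`. The sigmoid `φ` is odd, and on `[0, ∞)` it equals
`(1 - 1/(1 + x^(2m)))^(1/(2m))`, which is increasing with limit `1`; with `h = 2`, `a = -1`, `b = 1`
this gives `∫ Φ = 2 · 2 / 4 = 1`.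
-/

open MeasureTheory Set
open scoped Topology

theorem integrable_of_hasDerivAt_of_nonneg_of_tendsto {g g' : ℝ → ℝ} {a b : ℝ}
    (hderiv : ∀ x, HasDerivAt g (g' x) x) (hg' : ∀ x, 0 ≤ g' x)
    (hbot : Tendsto g atBot (𝓝 a)) (htop : Tendsto g atTop (𝓝 b)) : Integrable g' := by
  have hcont : Continuous g := continuous_iff_continuousAt.2 fun x => (hderiv x).continuousAt
  have hint : ∀ s t : ℝ, IntegrableOn g' (Ioc s t) := fun s t =>
    intervalIntegral.integrableOn_deriv_of_nonneg hcont.continuousOn (fun x _ => hderiv x)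
      fun x _ => hg' x
  refine integrable_of_intervalIntegral_norm_tendsto (b - a) (fun t : ℝ => hint (-t) t)
    tendsto_neg_atTop_atBot tendsto_id ?_
  have hFTC : ∀ t : ℝ, -t ≤ t → ∫ x in -t..t, ‖g' x‖ = g t - g (-t) := fun t ht => by
    simp_rw [Real.norm_of_nonneg (hg' _)]
    exact intervalIntegral.integral_eq_sub_of_hasDerivAt (fun x _ => hderiv x)
      ((intervalIntegrable_iff_integrableOn_Ioc_of_le ht).2 (hint _ _))
  refine (htop.sub (hbot.comp tendsto_neg_atTop_atBot)).congr' ?_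
  filter_upwards [eventually_ge_atTop 0] with t ht
  exact (hFTC t (by linarith)).symm

theorem hasDerivAt_intervalIntegral_add {f : ℝ → ℝ} (hf : Continuous f) (h x : ℝ) :
    HasDerivAt (fun y => ∫ t in y..y + h, f t) (f (x + h) - f x) x := by
  have hprim : ∀ y, HasDerivAt (fun u => ∫ t in (0 : ℝ)..u, f t) (f y) y := fun y =>
    (hf.integral_hasStrictDerivAt 0 y).hasDerivAt
  refine (((hprim (x + h)).comp_add_const x h).sub (hprim x)).congr_of_eventuallyEq ?_
  filter_upwards with y
  exact (intervalIntegral.integral_interval_sub_left (hf.intervalIntegrable _ _)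
    (hf.intervalIntegrable _ _)).symm

section Monotone

variable {f : ℝ → ℝ}

theorem Monotone.mul_le_intervalIntegral (hf : Monotone f) {x y : ℝ} (hxy : x ≤ y) :
    (y - x) * f x ≤ ∫ t in x..y, f t := by
  have := intervalIntegral.integral_mono_on hxy (intervalIntegrable_const (μ := volume))
    hf.intervalIntegrable fun t ht => hf ht.1
  simpa using this

theorem Monotone.intervalIntegral_le_mul (hf : Monotone f) {x y : ℝ} (hxy : x ≤ y) :
    ∫ t in x..y, f t ≤ (y - x) * f y := by
  have := intervalIntegral.integral_mono_on hxy hf.intervalIntegrable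
    (intervalIntegrable_const (μ := volume)) fun t ht => hf ht.2
  simpa using this

theorem Monotone.tendsto_intervalIntegral_add_atTop (hf : Monotone f) {b : ℝ}
    (htop : Tendsto f atTop (𝓝 b)) {h : ℝ} (hh : 0 ≤ h) :
    Tendsto (fun x => ∫ t in x..x + h, f t) atTop (𝓝 (h * b)) := by
  have hshift := htop.comp (tendsto_atTop_add_const_right atTop h tendsto_id)
  refine tendsto_of_tendsto_of_tendsto_of_le_of_le (htop.const_mul h) (hshift.const_mul h)
    (fun x => ?_) fun x => ?_
  · simpa using hf.mul_le_intervalIntegral (le_add_of_nonneg_right hh : x ≤ x + h)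
  · simpa using hf.intervalIntegral_le_mul (le_add_of_nonneg_right hh : x ≤ x + h)

theorem Monotone.tendsto_intervalIntegral_add_atBot (hf : Monotone f) {a : ℝ}
    (hbot : Tendsto f atBot (𝓝 a)) {h : ℝ} (hh : 0 ≤ h) :
    Tendsto (fun x => ∫ t in x..x + h, f t) atBot (𝓝 (h * a)) := by
  have hshift := hbot.comp (tendsto_atBot_add_const_right atBot h tendsto_id)
  refine tendsto_of_tendsto_of_tendsto_of_le_of_le (hbot.const_mul h) (hshift.const_mul h)
    (fun x => ?_) fun x => ?_
  · simpa using hf.mul_le_intervalIntegral (le_add_of_nonneg_right hh : x ≤ x + h)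
  · simpa using hf.intervalIntegral_le_mul (le_add_of_nonneg_right hh : x ≤ x + h)

theorem Monotone.integral_comp_add_sub {a b : ℝ} (hf : Monotone f) (hcont : Continuous f)
    (hbot : Tendsto f atBot (𝓝 a)) (htop : Tendsto f atTop (𝓝 b)) {h : ℝ} (hh : 0 ≤ h) :
    ∫ x, (f (x + h) - f x) = h * (b - a) := by
  have hderiv := hasDerivAt_intervalIntegral_add hcont h
  have hbot' := hf.tendsto_intervalIntegral_add_atBot hbot hh
  have htop' := hf.tendsto_intervalIntegral_add_atTop htop hh
  have hnonneg : ∀ x, 0 ≤ f (x + h) - f x := fun x =>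
    sub_nonneg.2 (hf (le_add_of_nonneg_right hh))
  rw [integral_of_hasDerivAt_of_tendsto hderiv
    (integrable_of_hasDerivAt_of_nonneg_of_tendsto hderiv hnonneg hbot' htop') hbot' htop']
  ring

end Monotone

theorem phi_neg (m : ℕ) (x : ℝ) : phi m (-x) = -phi m x := by
  rw [phi, phi, Even.neg_pow ⟨m, two_mul m⟩, neg_div]

theorem one_add_pow_two_mul_pos (m : ℕ) (x : ℝ) : 0 < 1 + x ^ (2 * m) := by
  rw [pow_mul]
  positivity

theorem continuous_phi (m : ℕ) : Continuous (phi m) :=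
  continuous_id.div ((continuous_const.add (continuous_pow _)).rpow_const
    fun x => Or.inl (one_add_pow_two_mul_pos m x).ne')
    fun x => (rpow_pos_of_pos (one_add_pow_two_mul_pos m x) _).ne'

theorem phi_eq_of_nonneg {m : ℕ} (hm : 1 ≤ m) {x : ℝ} (hx : 0 ≤ x) :
    phi m x = (1 - (1 + x ^ (2 * m))⁻¹) ^ ((1 : ℝ) / (2 * m)) := by
  have hpos := one_add_pow_two_mul_pos m x
  have hroot : (x ^ (2 * m)) ^ ((1 : ℝ) / (2 * m)) = x := by
    rw [one_div]
    exact_mod_cast pow_rpow_inv_natCast hx (by omega : 2 * m ≠ 0)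
  have hbase : 1 - (1 + x ^ (2 * m))⁻¹ = x ^ (2 * m) / (1 + x ^ (2 * m)) := by
    field_simp
    ring
  rw [phi, hbase, div_rpow (by positivity) hpos.le, hroot]

theorem monotoneOn_phi {m : ℕ} (hm : 1 ≤ m) : MonotoneOn (phi m) (Ici 0) := by
  intro x (hx : 0 ≤ x) y (hy : 0 ≤ y) hxy
  rw [phi_eq_of_nonneg hm hx, phi_eq_of_nonneg hm hy]
  have hbase_nonneg : 0 ≤ 1 - (1 + x ^ (2 * m))⁻¹ :=
    sub_nonneg.2 (inv_le_one_of_one_le₀ (le_add_of_nonneg_right (by positivity)))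
  gcongr

theorem monotone_phi {m : ℕ} (hm : 1 ≤ m) : Monotone (phi m) :=
  monotone_of_odd_of_monotoneOn_nonneg (phi_neg m) (monotoneOn_phi hm)

theorem tendsto_phi_atTop {m : ℕ} (hm : 1 ≤ m) : Tendsto (phi m) atTop (𝓝 1) := by
  have hinv : Tendsto (fun x : ℝ => (1 + x ^ (2 * m))⁻¹) atTop (𝓝 0) :=
    (tendsto_atTop_add_const_left _ 1 (tendsto_pow_atTop (by omega))).inv_tendsto_atTop
  have := ((tendsto_const_nhds (x := (1 : ℝ))).sub hinv).rpow_const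
    (p := (1 : ℝ) / (2 * m)) (Or.inr (by positivity))
  rw [sub_zero, one_rpow] at this
  refine this.congr' ?_
  filter_upwards [eventually_ge_atTop 0] with x hx
  exact (phi_eq_of_nonneg hm hx).symm

theorem tendsto_phi_atBot {m : ℕ} (hm : 1 ≤ m) : Tendsto (phi m) atBot (𝓝 (-1)) := by
  have := ((tendsto_phi_atTop hm).comp tendsto_neg_atBot_atTop).neg
  refine this.congr fun x => ?_
  simp [phi_neg]

theorem Phi_integral_eq_one (m : ℕ) (hm : 1 ≤ m) :
    ∫ x : ℝ, Phi m x = 1 := by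
  have hshift : ∀ x, Phi m x = 4⁻¹ * (phi m (x - 1 + 2) - phi m (x - 1)) := fun x => by
    rw [Phi, show x - 1 + 2 = x + 1 by ring]; ring
  have key := (monotone_phi hm).integral_comp_add_sub (continuous_phi m) (tendsto_phi_atBot hm)
    (tendsto_phi_atTop hm) zero_le_two
  simp_rw [hshift]
  rw [integral_const_mul, integral_sub_right_eq_self (fun y => phi m (y + 2) - phi m y), key]
  norm_num
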